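/- arXiv:2509.02147 — 4 statements merged into one kernel-verified Lean document; each statement's English description precedes it below -/
import Mathlib

section
/- Let τ > 0, r > 0, Δ ≥ 0, T_c > 0, β ∈ [0, 1), x_i ∈ (0, r], and let D ≥ T_c be a real number satisfying the implicit equation D = (1/r)(Δ + τ (r − x_i)(1 − e^{−(D − β T_c)/τ})) + β T_c. Then D ≤ Δ/r + τ (1 − e^{−(D − T_c)/τ}) + T_c. -/
/-! The neuron potential reaches the threshold no later than if it had started from `x_i = 0`,
which gives `D ≤ Δ / r + τ (1 - e^{-(D - β T_c)/τ}) + β T_c`. Moving the firing delay from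
`β T_c` to `T_c` can only increase this bound, because `t ↦ τ (1 - e^{-(D - t)/τ}) + t` is
monotone for `t ≤ D`: `exp` is `1`-Lipschitz on `(-∞, 0]`. -/

open Real Set

lemma exp_sub_exp_le_sub_of_le_of_nonpos {x y : ℝ} (hxy : x ≤ y) (hy : y ≤ 0) :
    exp y - exp x ≤ y - x := by
  have hexp : exp y * (1 - exp (x - y)) = exp y - exp x := by
    rw [mul_sub, mul_one, ← exp_add, add_sub_cancel]
  have hlin : 1 - exp (x - y) ≤ y - x := by linarith [add_one_le_exp (x - y)]
  calc exp y - exp x = exp y * (1 - exp (x - y)) := hexp.symm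
    _ ≤ 1 * (y - x) := by
      gcongr
      · linarith [exp_le_one_iff.2 (sub_nonpos.2 hxy)]
      · exact exp_le_one_iff.2 hy
    _ = y - x := one_mul _

lemma monotoneOn_mul_one_sub_exp_add {τ : ℝ} (hτ : 0 < τ) (D : ℝ) :
    MonotoneOn (fun t => τ * (1 - exp (-(D - t) / τ)) + t) (Iic D) := by
  intro a _ b hb hab
  have hexp := exp_sub_exp_le_sub_of_le_of_nonpos
    (x := -(D - a) / τ) (y := -(D - b) / τ) (by gcongr) (div_nonpos_of_nonpos_of_nonneg
      (by linarith [mem_Iic.1 hb]) hτ.le)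
  have hscaled : τ * (exp (-(D - b) / τ) - exp (-(D - a) / τ)) ≤ b - a := by
    calc τ * (exp (-(D - b) / τ) - exp (-(D - a) / τ))
        ≤ τ * (-(D - b) / τ - -(D - a) / τ) := by gcongr
      _ = b - a := by field_simp; ring
  dsimp only
  linarith

lemma inv_mul_add_mul_sub_mul_le {r τ Δ x E : ℝ} (hr : 0 < r) (hτ : 0 ≤ τ) (hx : 0 ≤ x)
    (hE : E ≤ 1) :
    (1 / r) * (Δ + τ * (r - x) * (1 - E)) ≤ Δ / r + τ * (1 - E) := by
  have hsplit : (1 / r) * (Δ + τ * (r - x) * (1 - E)) =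
      Δ / r + τ * (1 - E) - τ * x * (1 - E) / r := by
    field_simp
    ring
  have hdrop : 0 ≤ τ * x * (1 - E) / r := by
    have : 0 ≤ 1 - E := by linarith
    positivity
  linarith

theorem stmt_5_general (τ r Δ Tc β xi D : ℝ) (hτ : 0 < τ) (hr : 0 < r)
    (hTc : 0 < Tc) (hβ1 : β < 1)
    (hxi0 : 0 < xi) (hD : Tc ≤ D)
    (heq : D = (1 / r) * (Δ + τ * (r - xi) * (1 - Real.exp (-(D - β * Tc) / τ)))
              + β * Tc) :
    D ≤ Δ / r + τ * (1 - Real.exp (-(D - Tc) / τ)) + Tc := by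
  have hβTc : β * Tc ≤ Tc := by nlinarith
  have hexp_le : exp (-(D - β * Tc) / τ) ≤ 1 :=
    exp_le_one_iff.2 (div_nonpos_of_nonpos_of_nonneg (by linarith) hτ.le)
  have hmono :=
    monotoneOn_mul_one_sub_exp_add hτ D (mem_Iic.2 (hβTc.trans hD)) (mem_Iic.2 hD) hβTc
  calc D ≤ Δ / r + τ * (1 - exp (-(D - β * Tc) / τ)) + β * Tc := by
        linarith [inv_mul_add_mul_sub_mul_le (Δ := Δ) hr hτ.le hxi0.le hexp_le]
    _ ≤ Δ / r + τ * (1 - exp (-(D - Tc) / τ)) + Tc := by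
        dsimp only at hmono
        linarith

/-- Bound on the dwell time: if D ≥ T_c satisfies the implicit equation
    D = (1/r)(Δ + τ(r − x_i)(1 − e^{−(D − β T_c)/τ})) + β T_c, then
    D ≤ Δ/r + τ(1 − e^{−(D − T_c)/τ}) + T_c. -/
theorem stmt_5 (τ r Δ Tc β xi D : ℝ) (hτ : 0 < τ) (hr : 0 < r)
    (hΔ : 0 ≤ Δ) (hTc : 0 < Tc) (hβ0 : 0 ≤ β) (hβ1 : β < 1)
    (hxi0 : 0 < xi) (hxir : xi ≤ r) (hD : Tc ≤ D)
    (heq : D = (1 / r) * (Δ + τ * (r - xi) * (1 - Real.exp (-(D - β * Tc) / τ)))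
              + β * Tc) :
    D ≤ Δ / r + τ * (1 - Real.exp (-(D - Tc) / τ)) + Tc :=
  stmt_5_general τ r Δ Tc β xi D hτ hr hTc hβ1 hxi0 hD heq
end

section
/- Let τ > 0, 0 < α < r, T_c ∈ (0, τ ln(r/(r−α))], and Δ ∈ [0, r τ ln(r/(r−α)) − r τ (1 − ((r−α)/r) e^{T_c/τ}) − r T_c]. Let β ∈ [0, 1) and x_i ∈ (0, r], and suppose D ≥ T_c satisfies the implicit equation D = (1/r)(Δ + τ (r − x_i)(1 − e^{−(D − β T_c)/τ})) + β T_c. Then D ≤ τ ln(r/(r−α)). -/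
/-!
Write `S(s) = τ (1 - e^{-s/τ})`, so that the firing equation reads
`r D = Δ + (r - xᵢ) S(D - β T_c) + r β T_c`. Since `S' = e^{-s/τ} ≤ 1` on `s ≥ 0`, `S` is
1-Lipschitz there. Comparing `S(D - β T_c)` with `S(τ_d - β T_c)` and then with `S(τ_d - T_c)`,
the upper bound on `Δ` (whose exponential term is `S(τ_d - T_c)`) gives
`r D ≤ r τ_d + (r - xᵢ)(D - τ_d)`, i.e. `xᵢ (D - τ_d) ≤ 0`.
-/

open Real

noncomputable section

/-- The neuron potential is `ξ(s) = r s - (r - xᵢ) * saturation τ s`. -/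
def saturation (τ s : ℝ) : ℝ := τ * (1 - exp (-s / τ))

section saturation

variable {τ : ℝ}

lemma saturation_nonneg (hτ : 0 < τ) {s : ℝ} (hs : 0 ≤ s) : 0 ≤ saturation τ s := by
  have : exp (-s / τ) ≤ 1 :=
    exp_le_one_iff.mpr (div_nonpos_of_nonpos_of_nonneg (neg_nonpos.mpr hs) hτ.le)
  exact mul_nonneg hτ.le (sub_nonneg.mpr this)

lemma saturation_le_self (hτ : 0 < τ) (s : ℝ) : saturation τ s ≤ s := by
  have h := one_sub_le_exp_neg (s / τ)
  rw [← neg_div] at h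
  have : τ * (1 - s / τ) = τ - s := by rw [mul_sub, mul_one, mul_div_cancel₀ _ hτ.ne']
  unfold saturation
  nlinarith [mul_le_mul_of_nonneg_left h hτ.le]

lemma saturation_add (a t : ℝ) :
    saturation τ (a + t) = saturation τ a + exp (-a / τ) * saturation τ t := by
  have : exp (-(a + t) / τ) = exp (-a / τ) * exp (-t / τ) := by
    rw [← exp_add]; ring_nf
  unfold saturation
  rw [this]
  ring

lemma saturation_sub_le (hτ : 0 < τ) {a b : ℝ} (ha : 0 ≤ a) (hab : a ≤ b) :
    saturation τ b - saturation τ a ≤ b - a := by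
  have hdecay : exp (-a / τ) ≤ 1 :=
    exp_le_one_iff.mpr (div_nonpos_of_nonpos_of_nonneg (by linarith) hτ.le)
  have hstep := saturation_le_self hτ (b - a)
  have hpos := saturation_nonneg hτ (sub_nonneg.mpr hab)
  have hsplit := saturation_add (τ := τ) a (b - a)
  rw [add_sub_cancel] at hsplit
  rw [hsplit]
  nlinarith [exp_pos (-a / τ)]

end saturation

lemma exp_neg_div_mul_log_div {τ r α : ℝ} (hτ : τ ≠ 0) (hr : 0 < r) (hrα : 0 < r - α) :
    exp (-(τ * log (r / (r - α))) / τ) = (r - α) / r := by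
  rw [neg_div, mul_div_cancel_left₀ _ hτ, exp_neg, exp_log (div_pos hr hrα), inv_div]

theorem stmt_8_general (τ α r Tc Δ β xi D : ℝ) (hτ : 0 < τ) (hαr : α < r)
    (hTc0 : 0 < Tc) (hTc : Tc ≤ τ * Real.log (r / (r - α)))
    (hΔ : Δ ≤ r * τ * Real.log (r / (r - α))
            - r * τ * (1 - ((r - α) / r) * Real.exp (Tc / τ)) - r * Tc)
    (hβ1 : β < 1) (hxi0 : 0 < xi) (hxir : xi ≤ r)
    (heq : D = (1 / r) * (Δ + τ * (r - xi) * (1 - Real.exp (-(D - β * Tc) / τ)))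
              + β * Tc) :
    D ≤ τ * Real.log (r / (r - α)) := by
  have hr : 0 < r := hxi0.trans_le hxir
  have hβTc : β * Tc ≤ Tc := by nlinarith
  have hfire : r * D = Δ + (r - xi) * saturation τ (D - β * Tc) + r * (β * Tc) := by
    rw [saturation]; nth_rewrite 1 [heq]; field_simp
  have hthreshold : Δ ≤ r * (τ * log (r / (r - α)))
      - r * saturation τ (τ * log (r / (r - α)) - Tc) - r * Tc := by
    have : (r - α) / r * exp (Tc / τ) = exp (-(τ * log (r / (r - α)) - Tc) / τ) := by
      rw [← exp_neg_div_mul_log_div hτ.ne' hr (sub_pos.mpr hαr), ← exp_add]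
      congr 1; ring
    rw [saturation, ← this]
    linarith
  generalize τ * log (r / (r - α)) = τd at hTc hthreshold ⊢
  rcases le_or_gt D τd with hle | hgt
  · exact hle
  have hlate := saturation_sub_le hτ (by linarith) (by linarith : τd - β * Tc ≤ D - β * Tc)
  have hearly := saturation_sub_le hτ (by linarith) (by linarith : τd - Tc ≤ τd - β * Tc)
  have hmid := saturation_nonneg hτ (by linarith : 0 ≤ τd - β * Tc)
  nlinarith [mul_le_mul_of_nonneg_left hlate (sub_nonneg.mpr hxir)]

/-- With the threshold Δ chosen in the admissible interval, any dwell time D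
    satisfying the implicit firing-time equation is at most τ ln(r/(r−α)). -/
theorem stmt_8 (τ α r Tc Δ β xi D : ℝ) (hτ : 0 < τ) (hα : 0 < α) (hαr : α < r)
    (hTc0 : 0 < Tc) (hTc : Tc ≤ τ * Real.log (r / (r - α)))
    (hΔ0 : 0 ≤ Δ)
    (hΔ : Δ ≤ r * τ * Real.log (r / (r - α))
            - r * τ * (1 - ((r - α) / r) * Real.exp (Tc / τ)) - r * Tc)
    (hβ0 : 0 ≤ β) (hβ1 : β < 1) (hxi0 : 0 < xi) (hxir : xi ≤ r)
    (hD : Tc ≤ D)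
    (heq : D = (1 / r) * (Δ + τ * (r - xi) * (1 - Real.exp (-(D - β * Tc) / τ)))
              + β * Tc) :
    D ≤ τ * Real.log (r / (r - α)) :=
  stmt_8_general τ α r Tc Δ β xi D hτ hαr hTc0 hTc hΔ hβ1 hxi0 hxir heq
end
end

section
/- Let τ > 0, 0 < α < r, x_i ∈ (0, r], and 0 ≤ D ≤ τ ln(r/(r−α)). Then r − e^{−D/τ}(r − x_i) − α ≤ ((r−α)/r) x_i. -/
/-! The dwell-time bound says exactly that the decay factor `e^{-D/τ}` is at least
`γ = (r-α)/r`. Since `r - γ (r - x) - α = γ x` (because `γ r = r - α`), replacing `γ` by the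
larger factor only multiplies the nonnegative `r - x` by more, which lowers the left-hand side. -/

lemma div_le_exp_neg_div_of_le_mul_log {τ a b D : ℝ} (hτ : 0 < τ) (ha : 0 < a) (hb : 0 < b)
    (hD : D ≤ τ * Real.log (a / b)) : b / a ≤ Real.exp (-D / τ) := by
  rw [← Real.log_le_iff_le_exp (div_pos hb ha), ← inv_div, Real.log_inv, neg_div,
    neg_le_neg_iff, div_le_iff₀ hτ, mul_comm]
  exact hD

lemma sub_mul_sub_sub_le_mul {γ c r x α : ℝ} (hγc : γ ≤ c) (hxr : x ≤ r)
    (hγ : γ * r = r - α) : r - c * (r - x) - α ≤ γ * x := by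
  linarith [mul_le_mul_of_nonneg_right hγc (sub_nonneg.mpr hxr)]

theorem stmt_9_general (τ α r xi D : ℝ) (hτ : 0 < τ) (hα : 0 < α) (hαr : α < r)
    (hxir : xi ≤ r)
    (hD : D ≤ τ * Real.log (r / (r - α))) :
    r - Real.exp (-D / τ) * (r - xi) - α ≤ ((r - α) / r) * xi := by
  have hr : 0 < r := hα.trans hαr
  have hdecay : (r - α) / r ≤ Real.exp (-D / τ) :=
    div_le_exp_neg_div_of_le_mul_log hτ hr (sub_pos.mpr hαr) hD
  exact sub_mul_sub_sub_le_mul hdecay hxir (div_mul_cancel₀ _ hr.ne')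

/-- Per-cycle contraction: if the dwell time D is at most τ ln(r/(r−α)), then
    the error just after the next pellet launch satisfies
    r − e^{−D/τ}(r − x_i) − α ≤ ((r−α)/r) x_i. -/
theorem stmt_9 (τ α r xi D : ℝ) (hτ : 0 < τ) (hα : 0 < α) (hαr : α < r)
    (hxi0 : 0 < xi) (hxir : xi ≤ r)
    (hD0 : 0 ≤ D) (hD : D ≤ τ * Real.log (r / (r - α))) :
    r - Real.exp (-D / τ) * (r - xi) - α ≤ ((r - α) / r) * xi :=
  stmt_9_general τ α r xi D hτ hα hαr hxir hD
end

section
/- Let τ > 0, 0 < α < r, x_i ∈ (0, r], and 0 ≤ D ≤ τ ln(r/(r−α)). Then: (i) for every s ∈ [0, D], −α < r − e^{−s/τ}(r − x_i) ≤ ((r−α)/r) x_i + α; and (ii) the post-launch value y := r − e^{−D/τ}(r − x_i) − α satisfies −α < y ≤ ((r−α)/r) x_i. -/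
/-! Write `q = exp (-s / τ)`, so the flow value is `r - q (r - xᵢ)`, affine and decreasing in `q`
because `xᵢ ≤ r`. The dwell-time bound `s ≤ D ≤ τ ln (r / (r - α))` says exactly `q ≥ γ = (r - α) / r`,
and `s ≥ 0` gives `q ≤ 1`. At `q = 1` the flow value is `xᵢ > 0 > -α`; at `q = γ` it is
`γ xᵢ + α`. Subtracting `α` at the launch gives the post-launch bounds. -/

open Real Set

lemma le_exp_neg_div_of_le_mul_log_inv {τ c s : ℝ} (hτ : 0 < τ) (hc : 0 < c)
    (hs : s ≤ τ * log c⁻¹) : c ≤ exp (-s / τ) := by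
  rw [log_inv] at hs
  calc c = exp (log c) := (exp_log hc).symm
    _ ≤ exp (-s / τ) := exp_le_exp.mpr (by rw [le_div_iff₀ hτ]; linarith)

lemma exp_neg_div_mem_Icc {τ c s : ℝ} (hτ : 0 < τ) (hc : 0 < c) (hs0 : 0 ≤ s)
    (hs : s ≤ τ * log c⁻¹) : exp (-s / τ) ∈ Icc c 1 :=
  ⟨le_exp_neg_div_of_le_mul_log_inv hτ hc hs,
    exp_le_one_iff.mpr (div_nonpos_of_nonpos_of_nonneg (neg_nonpos.mpr hs0) hτ.le)⟩

lemma le_sub_mul_sub_of_le_one {r x q : ℝ} (hx : x ≤ r) (hq : q ≤ 1) :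
    x ≤ r - q * (r - x) := by
  nlinarith

lemma sub_mul_sub_le_of_div_le {r α x q : ℝ} (hr : 0 < r) (hx : x ≤ r) (hq : (r - α) / r ≤ q) :
    r - q * (r - x) ≤ (r - α) / r * x + α := by
  have hγ : (r - α) / r * (r - x) ≤ q * (r - x) := mul_le_mul_of_nonneg_right hq (by linarith)
  have hγr : (r - α) / r * r = r - α := div_mul_cancel₀ _ hr.ne'
  nlinarith

/-- One control cycle: flow for time D ≤ τ ln(r/(r−α)) from x_i ∈ (0, r], then a
    pellet launch decreasing the error by α. During the flow the error stays in
    (−α, ((r−α)/r) x_i + α], and the post-launch error lies in (−α, ((r−α)/r) x_i]. -/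
theorem stmt_10 (τ α r xi D : ℝ) (hτ : 0 < τ) (hα : 0 < α) (hαr : α < r)
    (hxi0 : 0 < xi) (hxir : xi ≤ r)
    (hD0 : 0 ≤ D) (hD : D ≤ τ * Real.log (r / (r - α))) :
    (∀ s, 0 ≤ s → s ≤ D →
      -α < r - Real.exp (-s / τ) * (r - xi) ∧
      r - Real.exp (-s / τ) * (r - xi) ≤ ((r - α) / r) * xi + α) ∧
    (-α < r - Real.exp (-D / τ) * (r - xi) - α ∧
      r - Real.exp (-D / τ) * (r - xi) - α ≤ ((r - α) / r) * xi) := by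
  have hr : 0 < r := hα.trans hαr
  have hγ : 0 < (r - α) / r := div_pos (by linarith) hr
  have hflow : ∀ s, 0 ≤ s → s ≤ D →
      xi ≤ r - exp (-s / τ) * (r - xi) ∧ r - exp (-s / τ) * (r - xi) ≤ (r - α) / r * xi + α := by
    intro s hs0 hsD
    obtain ⟨hγq, hq1⟩ := exp_neg_div_mem_Icc hτ hγ hs0 (by rw [inv_div]; linarith)
    exact ⟨le_sub_mul_sub_of_le_one hxir hq1, sub_mul_sub_le_of_div_le hr hxir hγq⟩
  obtain ⟨hDlo, hDhi⟩ := hflow D hD0 le_rfl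
  exact ⟨fun s hs0 hsD => ⟨by linarith [(hflow s hs0 hsD).1], (hflow s hs0 hsD).2⟩,
    by linarith, by linarith⟩
end
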